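/- If k/2^n ≤ x < (k+1)/2^n and the deficient digit values of x satisfy D_i(x) > 0 for all i ≥ n, then τ(x) ≤ τ((k+1)/2^n). -/

import Mathlib

open Finset

/-- Distance from `t` to the nearest integer. -/
noncomputable def distNearestInt (t : ℝ) : ℝ := ⨅ n : ℤ, |t - (n : ℝ)|

/-- The Takagi function. -/
noncomputable def takagi (x : ℝ) : ℝ := ∑' n : ℕ, distNearestInt (2 ^ n * x) / 2 ^ n

/-- The partial Takagi function of level `n`. -/
noncomputable def takagiPartial (n : ℕ) (x : ℝ) : ℝ :=
  ∑ j ∈ Finset.range n, distNearestInt (2 ^ j * x) / 2 ^ j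

/-- The deficient digit function `D_j` attached to a binary digit sequence `b`
(with `b i` the `(i+1)`-st binary digit): number of 0's minus number of 1's
among the first `j` digits. -/
def defD (b : ℕ → ℕ) (j : ℕ) : ℤ := (j : ℤ) - 2 * ∑ i ∈ Finset.range j, (b i : ℤ)

/-- `x` is the real number with binary expansion `0.b₁b₂b₃…`, `b i` being digit `i+1`. -/
def IsBinaryExpansion (b : ℕ → ℕ) (x : ℝ) : Prop :=
  (∀ i, b i ≤ 1) ∧ x = ∑' i : ℕ, (b i : ℝ) / 2 ^ (i + 1)

/-- The deficient digit set `Ω^L`. -/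
def OmegaL : Set ℝ :=
  {x | ∃ b : ℕ → ℕ, IsBinaryExpansion b x ∧ ∀ j ≥ 1, 0 ≤ defD b j}



lemma dni_bdd (t : ℝ) : BddBelow (Set.range fun n : ℤ => |t - (n : ℝ)|) :=
  ⟨0, by rintro y ⟨n, rfl⟩; positivity⟩

lemma dni_le (t : ℝ) (n : ℤ) : distNearestInt t ≤ |t - (n : ℝ)| :=
  ciInf_le (dni_bdd t) n

lemma dni_eq_min (t : ℝ) : distNearestInt t = min (Int.fract t) (1 - Int.fract t) := by
  have hf0 := Int.fract_nonneg t
  have hf1 := Int.fract_lt_one t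
  apply le_antisymm
  · apply le_min
    · have := dni_le t ⌊t⌋
      rwa [show t - (⌊t⌋:ℝ) = Int.fract t from rfl, abs_of_nonneg hf0] at this
    · have := dni_le t (⌊t⌋ + 1)
      rw [abs_sub_comm] at this
      calc distNearestInt t ≤ |(((⌊t⌋:ℤ)+1:ℤ):ℝ) - t| := this
        _ = 1 - Int.fract t := by
            push_cast
            rw [abs_of_nonneg (by nlinarith [(Int.self_sub_floor t).symm, Int.fract_lt_one t])]
            nlinarith [(Int.self_sub_floor t).symm]
  · apply le_ciInf
    intro n
    rcases le_or_gt (n:ℝ) (⌊t⌋:ℝ) with h | h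
    · refine le_trans (min_le_left _ _) ?_
      have : Int.fract t ≤ t - n := by
        have := (Int.self_sub_floor t).symm
        linarith [Int.floor_le t]
      calc Int.fract t ≤ t - n := this
        _ ≤ |t - n| := le_abs_self _
    · have hn : (⌊t⌋:ℝ) + 1 ≤ (n:ℝ) := by exact_mod_cast Int.lt_iff_add_one_le.mp (by exact_mod_cast h)
      refine le_trans (min_le_right _ _) ?_
      have : 1 - Int.fract t ≤ (n:ℝ) - t := by
        have := (Int.self_sub_floor t).symm
        linarith
      calc 1 - Int.fract t ≤ (n:ℝ) - t := this
        _ ≤ |t - n| := by rw [abs_sub_comm]; exact le_abs_self _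

lemma dni_nonneg (t : ℝ) : 0 ≤ distNearestInt t := by
  rw [dni_eq_min]
  have := Int.fract_nonneg t; have := Int.fract_lt_one t
  simp only [le_min_iff]; constructor <;> linarith

lemma dni_le_half (t : ℝ) : distNearestInt t ≤ 1 / 2 := by
  rw [dni_eq_min]
  rcases le_or_gt (Int.fract t) (1/2) with h | h
  · exact le_trans (min_le_left _ _) h
  · exact le_trans (min_le_right _ _) (by linarith)

lemma dni_int_add (t : ℝ) (m : ℤ) : distNearestInt ((m : ℝ) + t) = distNearestInt t := by
  rw [dni_eq_min, dni_eq_min, Int.fract_intCast_add]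

lemma dni_int (m : ℤ) : distNearestInt (m : ℝ) = 0 := by
  have := dni_int_add 0 m
  rw [add_zero] at this
  rw [this, dni_eq_min]
  simp [Int.fract_zero]

lemma dni_of_mem_Icc {s : ℝ} (h0 : 0 ≤ s) (h1 : s ≤ 1) :
    distNearestInt s = min s (1 - s) := by
  rcases lt_or_eq_of_le h1 with h | rfl
  · rw [dni_eq_min, Int.fract_eq_self.mpr ⟨h0, h⟩]
  · have : distNearestInt 1 = 0 := by exact_mod_cast dni_int 1
    simp [this]

lemma dni_lipschitz (a c : ℝ) : |distNearestInt a - distNearestInt c| ≤ |a - c| := by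
  have key : ∀ u v : ℝ, distNearestInt u - distNearestInt v ≤ |u - v| := by
    intro u v
    have h2 : distNearestInt u - |u - v| ≤ distNearestInt v := by
      apply le_ciInf
      intro n
      have := dni_le u n
      have habs := abs_sub_le u v ((n:ℝ))
      linarith
    linarith
  rw [abs_sub_le_iff]
  exact ⟨key a c, by rw [abs_sub_comm]; exact key c a⟩



lemma takagi_summable (x : ℝ) : Summable (fun j : ℕ => distNearestInt (2 ^ j * x) / 2 ^ j) := by
  apply Summable.of_nonneg_of_le (fun j => div_nonneg (dni_nonneg _) (by positivity))
    (fun j => ?_) summable_geometric_two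
  rw [div_le_iff₀ (by positivity : (0:ℝ) < 2 ^ j)]
  have h1 : ((1:ℝ)/2) ^ j * 2 ^ j = 1 := by
    rw [← mul_pow]; norm_num
  calc distNearestInt (2 ^ j * x) ≤ 1/2 := dni_le_half _
    _ ≤ 1 := by norm_num
    _ = (1/2)^j * 2^j := h1.symm


lemma takagi_nonneg (x : ℝ) : 0 ≤ takagi x :=
  tsum_nonneg fun j => div_nonneg (dni_nonneg _) (by positivity)

lemma takagi_le_one (x : ℝ) : takagi x ≤ 1 := by
  have h := Summable.tsum_le_tsum (f := fun j : ℕ => distNearestInt (2 ^ j * x) / 2 ^ j)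
    (g := fun j : ℕ => (1/2) * (1/2)^j) (fun j => ?_) (takagi_summable x)
    (Summable.mul_left _ summable_geometric_two)
  · refine h.trans ?_
    rw [tsum_mul_left, tsum_geometric_two]
    norm_num
  · rw [div_le_iff₀ (by positivity : (0:ℝ) < 2 ^ j)]
    calc distNearestInt (2 ^ j * x) ≤ 1/2 := dni_le_half _
      _ = 1/2 * ((1/2)^j * 2^j) := by rw [← mul_pow]; norm_num
      _ = 1/2 * (1/2)^j * 2^j := by ring

lemma takagi_split (m : ℕ) (y z : ℝ) (J : ℤ) (h : 2 ^ m * y = (J : ℝ) + z) :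
    takagi y = takagiPartial m y + takagi z / 2 ^ m := by
  have htail : ∀ j : ℕ, distNearestInt (2 ^ (j + m) * y) = distNearestInt (2 ^ j * z) := by
    intro j
    have : (2:ℝ) ^ (j + m) * y = ((2 ^ j * J : ℤ) : ℝ) + 2 ^ j * z := by
      push_cast
      rw [pow_add, mul_assoc, h]
      ring
    rw [this, dni_int_add]
  have hs := takagi_summable y
  have := (Summable.sum_add_tsum_nat_add (f := fun j : ℕ => distNearestInt (2 ^ j * y) / 2 ^ j) m hs).symm
  rw [takagi, this, takagiPartial]
  congr 1
  have : ∀ j : ℕ, distNearestInt (2 ^ (j + m) * y) / 2 ^ (j + m)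
      = (distNearestInt (2 ^ j * z) / 2 ^ j) * (1 / 2 ^ m) := by
    intro j
    rw [htail j, pow_add]
    ring
  calc (∑' j : ℕ, distNearestInt (2 ^ (j + m) * y) / 2 ^ (j + m))
      = ∑' j : ℕ, (distNearestInt (2 ^ j * z) / 2 ^ j) * (1 / 2 ^ m) := by
        exact tsum_congr this
    _ = takagi z / 2 ^ m := by rw [tsum_mul_right, takagi]; ring



/-- integer part at level m -/
def Jd (b : ℕ → ℕ) (m : ℕ) : ℕ := ∑ i ∈ Finset.range m, b i * 2 ^ (m - 1 - i)

/-- fractional tail at level m -/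
noncomputable def Fd (b : ℕ → ℕ) (m : ℕ) : ℝ := ∑' i : ℕ, (b (m + i) : ℝ) / 2 ^ (i + 1)

lemma bit_bound (b : ℕ → ℕ) (hb : ∀ i, b i ≤ 1) (m i : ℕ) :
    (b (m + i) : ℝ) / 2 ^ (i + 1) ≤ 1 / 2 / 2 ^ i := by
  have h1 : (b (m + i) : ℝ) ≤ 1 := by exact_mod_cast hb (m + i)
  rw [div_le_iff₀ (by positivity : (0:ℝ) < 2 ^ (i+1))]
  have : (1:ℝ) / 2 / 2 ^ i * 2 ^ (i + 1) = 1 := by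
    rw [pow_succ]
    field_simp
  rw [this]
  exact h1

lemma Fd_summable (b : ℕ → ℕ) (hb : ∀ i, b i ≤ 1) (m : ℕ) :
    Summable (fun i : ℕ => (b (m + i) : ℝ) / 2 ^ (i + 1)) :=
  Summable.of_nonneg_of_le (fun i => by positivity) (bit_bound b hb m)
    (summable_geometric_two' 1)

lemma Fd_nonneg (b : ℕ → ℕ) (m : ℕ) : 0 ≤ Fd b m :=
  tsum_nonneg fun i => by positivity

lemma Fd_le_one (b : ℕ → ℕ) (hb : ∀ i, b i ≤ 1) (m : ℕ) : Fd b m ≤ 1 := by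
  have h := Summable.tsum_le_tsum (bit_bound b hb m) (Fd_summable b hb m) (summable_geometric_two' 1)
  refine h.trans ?_
  rw [tsum_geometric_two' 1]

lemma Jd_succ (b : ℕ → ℕ) (m : ℕ) : Jd b (m + 1) = 2 * Jd b m + b m := by
  unfold Jd
  rw [Finset.sum_range_succ]
  have h1 : b m * 2 ^ (m + 1 - 1 - m) = b m := by simp
  rw [h1, Finset.mul_sum]
  congr 1
  apply Finset.sum_congr rfl
  intro i hi
  rw [Finset.mem_range] at hi
  have : m + 1 - 1 - i = (m - 1 - i) + 1 := by omega
  rw [this, pow_succ]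
  ring

lemma Fd_succ (b : ℕ → ℕ) (hb : ∀ i, b i ≤ 1) (m : ℕ) :
    Fd b m = (b m : ℝ) / 2 + Fd b (m + 1) / 2 := by
  unfold Fd
  rw [Summable.tsum_eq_zero_add (Fd_summable b hb m)]
  congr 1
  · norm_num
  · rw [← tsum_div_const]
    apply tsum_congr
    intro i
    have : m + (i + 1) = (m + 1) + i := by omega
    rw [this, pow_succ]
    ring

lemma pow_mul_self_eq (b : ℕ → ℕ) (hb : ∀ i, b i ≤ 1) (x : ℝ)
    (hx : x = ∑' i : ℕ, (b i : ℝ) / 2 ^ (i + 1)) (m : ℕ) :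
    2 ^ m * x = (Jd b m : ℝ) + Fd b m := by
  induction m with
  | zero => simp [Jd, Fd, hx]
  | succ m ih =>
    rw [pow_succ]
    have : (2:ℝ) ^ m * 2 * x = 2 * (2 ^ m * x) := by ring
    rw [this, ih, Fd_succ b hb m, Jd_succ b m]
    push_cast
    ring

lemma Fd_lt_one_of_zero (b : ℕ → ℕ) (hb : ∀ i, b i ≤ 1) :
    ∀ i0 m, b (m + i0) = 0 → Fd b m ≤ 1 - (1/2) ^ (i0 + 1) := by
  intro i0
  induction i0 with
  | zero =>
    intro m h0
    rw [Fd_succ b hb m]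
    have h1 : Fd b (m+1) ≤ 1 := Fd_le_one b hb (m+1)
    simp only [Nat.add_zero] at h0
    rw [h0]
    push_cast
    norm_num
    linarith
  | succ i0 ih =>
    intro m h0
    have h1 : b ((m + 1) + i0) = 0 := by rw [show (m+1) + i0 = m + (i0+1) by omega]; exact h0
    have h2 := ih (m + 1) h1
    rw [Fd_succ b hb m]
    have h3 : (b m : ℝ) ≤ 1 := by exact_mod_cast hb m
    have : ((1:ℝ)/2) ^ (i0 + 1 + 1) = (1/2)^(i0+1) / 2 := by rw [pow_succ]; ring
    rw [this]
    linarith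

lemma exists_zero_digit (b : ℕ → ℕ) (hb : ∀ i, b i ≤ 1) (n : ℕ)
    (hD : ∀ i, n ≤ i → 0 < defD b i) (m : ℕ) : ∃ i0, b (m + i0) = 0 := by
  by_contra h
  push_neg at h
  have hone : ∀ i, m ≤ i → b i = 1 := by
    intro i hi
    have h1 := h (i - m)
    rw [show m + (i - m) = i from by omega] at h1
    have h2 := hb i
    omega
  set M := max m n with hM
  set t := 2 * M + n + 1 with ht
  have hDt := hD t (by omega)
  have hsum : (t : ℤ) - (M : ℤ) ≤ ∑ i ∈ Finset.range t, (b i : ℤ) := by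
    have hsub : Finset.Ico M t ⊆ Finset.range t := by
      intro i hi
      rw [Finset.mem_range]; rw [Finset.mem_Ico] at hi; omega
    have h1 : ∑ i ∈ Finset.Ico M t, (b i : ℤ) ≤ ∑ i ∈ Finset.range t, (b i : ℤ) :=
      Finset.sum_le_sum_of_subset_of_nonneg hsub (fun i _ _ => by positivity)
    have h2 : ∑ i ∈ Finset.Ico M t, (b i : ℤ) = (t : ℤ) - (M : ℤ) := by
      have hc : ∀ i ∈ Finset.Ico M t, (b i : ℤ) = 1 := by
        intro i hi
        rw [Finset.mem_Ico] at hi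
        rw [hone i (le_trans (le_max_left m n) hi.1)]
        norm_num
      rw [Finset.sum_congr rfl hc, Finset.sum_const, Nat.card_Ico, nsmul_eq_mul, mul_one]
      push_cast
      omega
    omega
  unfold defD at hDt
  omega

def Bd (b : ℕ → ℕ) (i m : ℕ) : ℕ := ∑ j ∈ Finset.Ico i m, b j * 2 ^ (m - 1 - j)

lemma Jd_decomp (b : ℕ → ℕ) {i m : ℕ} (h : i ≤ m) :
    Jd b m = Jd b i * 2 ^ (m - i) + Bd b i m := by
  unfold Jd Bd
  rw [Finset.range_eq_Ico, ← Finset.sum_Ico_consecutive _ (Nat.zero_le i) h]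
  congr 1
  rw [Finset.sum_mul, Finset.range_eq_Ico]
  apply Finset.sum_congr rfl
  intro j hj
  rw [Finset.mem_Ico] at hj
  have : m - 1 - j = (i - 1 - j) + (m - i) := by omega
  rw [this, pow_add]
  ring

lemma geom_Ico (i : ℕ) : ∀ d : ℕ, ∑ j ∈ Finset.Ico i (i + d), 2 ^ (i + d - 1 - j) = 2 ^ d - 1 := by
  intro d
  induction d with
  | zero => simp
  | succ d ih =>
    rw [show i + (d+1) = (i + d) + 1 by omega,
      Finset.sum_Ico_succ_top (by omega : i ≤ i + d)]
    have h1 : ∑ j ∈ Finset.Ico i (i + d), 2 ^ (i + d + 1 - 1 - j)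
        = 2 * ∑ j ∈ Finset.Ico i (i + d), 2 ^ (i + d - 1 - j) := by
      rw [Finset.mul_sum]
      apply Finset.sum_congr rfl
      intro j hj
      rw [Finset.mem_Ico] at hj
      rw [show i + d + 1 - 1 - j = (i + d - 1 - j) + 1 by omega, pow_succ]
      ring
    rw [h1, ih]
    have : 1 ≤ 2 ^ d := Nat.one_le_two_pow
    rw [show i + d + 1 - 1 - (i + d) = 0 by omega]
    rw [pow_succ]
    omega

lemma Bd_lt (b : ℕ → ℕ) (hb : ∀ i, b i ≤ 1) {i m : ℕ} (h : i ≤ m) :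
    Bd b i m ≤ 2 ^ (m - i) - 1 := by
  unfold Bd
  calc ∑ j ∈ Finset.Ico i m, b j * 2 ^ (m - 1 - j)
      ≤ ∑ j ∈ Finset.Ico i m, 2 ^ (m - 1 - j) :=
        Finset.sum_le_sum (fun j _ => by
          calc b j * 2 ^ (m - 1 - j) ≤ 1 * 2 ^ (m - 1 - j) := Nat.mul_le_mul_right _ (hb j)
            _ = 2 ^ (m - 1 - j) := Nat.one_mul _)
    _ = 2 ^ (m - i) - 1 := by
        have := geom_Ico i (m - i)
        rw [show i + (m - i) = m by omega] at this
        exact this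

lemma Bd_zero (b : ℕ → ℕ) (hb : ∀ i, b i ≤ 1) {i m : ℕ} (h : i < m) (h0 : b i = 0) :
    Bd b i m ≤ 2 ^ (m - 1 - i) - 1 := by
  unfold Bd
  rw [Finset.sum_eq_sum_Ico_succ_bot h, h0]
  simp only [Nat.zero_mul, Nat.zero_add]
  have := Bd_lt b hb (show i + 1 ≤ m by omega)
  unfold Bd at this
  rw [show m - (i+1) = m - 1 - i by omega] at this
  calc ∑ j ∈ Finset.Ico (i+1) m, b j * 2 ^ (m - 1 - j) ≤ 2 ^ (m - 1 - i) - 1 := this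

lemma Bd_one (b : ℕ → ℕ) {i m : ℕ} (h : i < m) (h1 : b i = 1) :
    2 ^ (m - 1 - i) ≤ Bd b i m := by
  unfold Bd
  have hmem : i ∈ Finset.Ico i m := by rw [Finset.mem_Ico]; omega
  calc 2 ^ (m - 1 - i) = b i * 2 ^ (m - 1 - i) := by rw [h1]; ring
    _ ≤ ∑ j ∈ Finset.Ico i m, b j * 2 ^ (m - 1 - j) :=
        Finset.single_le_sum (f := fun j => b j * 2 ^ (m - 1 - j)) (fun j _ => Nat.zero_le _) hmem

lemma dni_term (b : ℕ → ℕ) (hb : ∀ i, b i ≤ 1) (i q : ℕ) (hq : 1 ≤ q) :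
    distNearestInt (2 ^ i * ((Jd b (i+q) + 1 : ℝ) / 2 ^ (i+q)))
      - distNearestInt (2 ^ i * ((2 * Jd b (i+q) + 1 : ℝ) / 2 ^ (i+q+1)))
    = (1 - 2 * (b i : ℝ)) / 2 ^ (q+1) := by
  have him : i ≤ i + q := by omega
  have hilt : i < i + q := by omega
  have hJd := Jd_decomp b him
  set A := Jd b i with hA
  set B := Bd b i (i+q) with hB
  rw [show i + q - i = q by omega] at hJd
  have hBlt : B ≤ 2 ^ q - 1 := by
    have := Bd_lt b hb him
    rwa [show i + q - i = q by omega] at this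
  have h2q : (1:ℕ) ≤ 2 ^ q := Nat.one_le_two_pow
  -- rewrite the arguments
  have e1 : (2:ℝ) ^ i * ((Jd b (i+q) + 1 : ℝ) / 2 ^ (i+q)) = (A:ℝ) + (B+1)/2^q := by
    rw [hJd]
    push_cast
    rw [pow_add]
    field_simp
    ring
  have e2 : (2:ℝ) ^ i * ((2 * Jd b (i+q) + 1 : ℝ) / 2 ^ (i+q+1)) = (A:ℝ) + (2*B+1)/2^(q+1) := by
    rw [hJd]
    push_cast
    rw [pow_add, pow_add]
    field_simp
    ring
  have hq2 : (0:ℝ) < 2 ^ q := by positivity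
  have hq21 : (0:ℝ) < 2 ^ (q+1) := by positivity
  have hu0 : (0:ℝ) ≤ ((B:ℝ)+1)/2^q := by positivity
  have hu1 : ((B:ℝ)+1)/2^q ≤ 1 := by
    rw [div_le_one hq2]
    have : (B:ℝ) + 1 ≤ 2^q := by
      have : (B:ℕ) + 1 ≤ 2^q := by omega
      exact_mod_cast this
    linarith
  have hv0 : (0:ℝ) ≤ ((2*B:ℝ)+1)/2^(q+1) := by positivity
  have hv1 : ((2*B:ℝ)+1)/2^(q+1) ≤ 1 := by
    rw [div_le_one hq21]
    have h1 : (2*B:ℕ) + 1 ≤ 2^(q+1) := by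
      have : 2^(q+1) = 2 * 2^q := by rw [pow_succ]; ring
      omega
    exact_mod_cast h1
  rw [e1, e2, show (A:ℝ) + ((B:ℝ)+1)/2^q = ((A:ℤ):ℝ) + ((B:ℝ)+1)/2^q by norm_cast,
    show (A:ℝ) + ((2*B:ℝ)+1)/2^(q+1) = ((A:ℤ):ℝ) + ((2*B:ℝ)+1)/2^(q+1) by norm_cast,
    dni_int_add, dni_int_add, dni_of_mem_Icc hu0 hu1, dni_of_mem_Icc hv0 hv1]
  have hpow : (2:ℝ)^q = 2 * 2^(q-1) := by
    rw [← pow_succ']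
    congr 1
    omega
  rcases Nat.lt_or_ge B (2^(q-1)) with hc | hc
  -- b i = 0 case and b i = 1 case determined by B vs 2^(q-1)
  · have hbi : b i = 0 := by
      by_contra hne
      have hb1 : b i = 1 := by have := hb i; omega
      have := Bd_one b hilt hb1
      rw [show i + q - 1 - i = q - 1 by omega, ← hB] at this
      omega
    have hBr : (B:ℝ) < 2^(q-1) := by exact_mod_cast hc
    have hu : ((B:ℝ)+1)/2^q ≤ 1/2 := by
      rw [div_le_div_iff₀ hq2 (by norm_num)]
      have : (B:ℝ) + 1 ≤ 2^(q-1) := by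
        have : (B:ℕ) + 1 ≤ 2^(q-1) := hc
        exact_mod_cast this
      nlinarith [hpow]
    have hv : ((2*B:ℝ)+1)/2^(q+1) ≤ 1/2 := by
      rw [div_le_div_iff₀ hq21 (by norm_num)]
      have h2 : (2:ℝ)^(q+1) = 2 * 2^q := by rw [pow_succ]; ring
      have hcc : (B:ℝ) + 1 ≤ 2^(q-1) := by exact_mod_cast hc
      nlinarith [hpow]
    rw [min_eq_left (by linarith), min_eq_left (by linarith), hbi]
    push_cast
    rw [div_sub_div _ _ (ne_of_gt hq2) (ne_of_gt hq21)]
    rw [show (2:ℝ)^(q+1) = 2 * 2^q by rw [pow_succ]; ring]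
    field_simp
    ring
  · have hbi : b i = 1 := by
      by_contra hne
      have hb0 : b i = 0 := by have := hb i; omega
      have := Bd_zero b hb hilt hb0
      rw [show i + q - 1 - i = q - 1 by omega, ← hB] at this
      have hone : (1:ℕ) ≤ 2 ^ (q-1) := Nat.one_le_two_pow
      omega
    have hBr : (2:ℝ)^(q-1) ≤ (B:ℝ) := by exact_mod_cast hc
    have hu : 1/2 ≤ ((B:ℝ)+1)/2^q := by
      rw [div_le_div_iff₀ (by norm_num) hq2]
      nlinarith [hpow]
    have hv : 1/2 ≤ ((2*B:ℝ)+1)/2^(q+1) := by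
      rw [div_le_div_iff₀ (by norm_num) hq21]
      have h2 : (2:ℝ)^(q+1) = 2 * 2^q := by rw [pow_succ]; ring
      nlinarith [hpow]
    rw [min_eq_right (by linarith), min_eq_right (by linarith), hbi]
    push_cast
    rw [show (2:ℝ)^(q+1) = 2 * 2^q by rw [pow_succ]; ring]
    field_simp
    ring

lemma takagi_zero : takagi 0 = 0 := by
  unfold takagi
  have : ∀ j : ℕ, distNearestInt (2 ^ j * (0:ℝ)) / 2 ^ j = 0 := by
    intro j
    rw [mul_zero, show (0:ℝ) = ((0:ℤ):ℝ) by norm_num, dni_int]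
    simp
  rw [tsum_congr this, tsum_zero]

lemma takagi_dyadic (m : ℕ) (J : ℤ) :
    takagi ((J:ℝ)/2^m) = takagiPartial m ((J:ℝ)/2^m) := by
  have h := takagi_split m ((J:ℝ)/2^m) 0 J (by field_simp; simp)
  rw [h, takagi_zero]
  simp

lemma takagiPartial_lipschitz (m : ℕ) (y z : ℝ) :
    |takagiPartial m y - takagiPartial m z| ≤ m * |y - z| := by
  unfold takagiPartial
  rw [← Finset.sum_sub_distrib]
  refine (Finset.abs_sum_le_sum_abs _ _).trans ?_
  have hterm : ∀ i ∈ Finset.range m,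
      |distNearestInt (2 ^ i * y) / 2 ^ i - distNearestInt (2 ^ i * z) / 2 ^ i| ≤ |y - z| := by
    intro i _
    rw [div_sub_div_same, abs_div, abs_of_pos (by positivity : (0:ℝ) < 2 ^ i),
      div_le_iff₀ (by positivity : (0:ℝ) < 2 ^ i)]
    refine (dni_lipschitz _ _).trans ?_
    rw [show (2:ℝ)^i * y - 2^i * z = 2^i * (y - z) by ring, abs_mul,
      abs_of_pos (by positivity : (0:ℝ) < 2 ^ i)]
    rw [mul_comm]
  refine (Finset.sum_le_sum hterm).trans ?_
  rw [Finset.sum_const, Finset.card_range, nsmul_eq_mul]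

lemma takagi_step (b : ℕ → ℕ) (hb : ∀ i, b i ≤ 1) (m : ℕ) :
    takagi ((Jd b m + 1 : ℝ) / 2 ^ m) - takagi ((2 * Jd b m + 1 : ℝ) / 2 ^ (m+1))
      = ((defD b m : ℝ) - 1) / 2 ^ (m+1) := by
  have hr : takagi ((Jd b m + 1 : ℝ) / 2 ^ m) = takagiPartial m ((Jd b m + 1 : ℝ) / 2 ^ m) := by
    have := takagi_dyadic m ((Jd b m : ℤ) + 1)
    push_cast at this ⊢
    exact this
  have hmid : takagi ((2 * Jd b m + 1 : ℝ) / 2 ^ (m+1))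
      = takagiPartial (m+1) ((2 * Jd b m + 1 : ℝ) / 2 ^ (m+1)) := by
    have := takagi_dyadic (m+1) (2 * (Jd b m : ℤ) + 1)
    push_cast at this ⊢
    exact this
  rw [hr, hmid]
  unfold takagiPartial
  rw [Finset.sum_range_succ]
  have hlast : distNearestInt (2 ^ m * ((2 * Jd b m + 1 : ℝ) / 2 ^ (m+1))) = 1/2 := by
    have e : (2:ℝ) ^ m * ((2 * Jd b m + 1 : ℝ) / 2 ^ (m+1)) = ((Jd b m : ℤ) : ℝ) + 1/2 := by
      rw [pow_succ]
      push_cast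
      field_simp
    rw [e, dni_int_add, dni_of_mem_Icc (by norm_num) (by norm_num)]
    norm_num
  rw [hlast]
  have hsum : ∑ i ∈ Finset.range m, distNearestInt (2 ^ i * ((Jd b m + 1 : ℝ) / 2 ^ m)) / 2 ^ i
      - ∑ i ∈ Finset.range m, distNearestInt (2 ^ i * ((2 * Jd b m + 1 : ℝ) / 2 ^ (m+1))) / 2 ^ i
      = (defD b m : ℝ) / 2 ^ (m+1) := by
    rw [← Finset.sum_sub_distrib]
    have hterm : ∀ i ∈ Finset.range m,
        distNearestInt (2 ^ i * ((Jd b m + 1 : ℝ) / 2 ^ m)) / 2 ^ i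
          - distNearestInt (2 ^ i * ((2 * Jd b m + 1 : ℝ) / 2 ^ (m+1))) / 2 ^ i
        = (1 - 2 * (b i : ℝ)) / 2 ^ (m+1) := by
      intro i hi
      rw [Finset.mem_range] at hi
      have := dni_term b hb i (m - i) (by omega)
      rw [show i + (m - i) = m by omega] at this
      rw [div_sub_div_same, this]
      rw [div_div, ← pow_add]
      congr 2
      omega
    rw [Finset.sum_congr rfl hterm, ← Finset.sum_div]
    congr 1
    unfold defD
    push_cast
    rw [Finset.sum_sub_distrib]
    rw [Finset.sum_const, Finset.card_range, nsmul_eq_mul, mul_one, ← Finset.mul_sum]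
  have h2 : (0:ℝ) < 2 ^ m := by positivity
  have e : (1:ℝ)/2/2^m = 1/2^(m+1) := by rw [pow_succ]; field_simp
  calc (∑ i ∈ Finset.range m, distNearestInt (2 ^ i * ((Jd b m + 1 : ℝ) / 2 ^ m)) / 2 ^ i)
      - ((∑ i ∈ Finset.range m, distNearestInt (2 ^ i * ((2 * Jd b m + 1 : ℝ) / 2 ^ (m+1))) / 2 ^ i)
        + 1/2/2^m)
      = (defD b m : ℝ) / 2 ^ (m+1) - 1/2^(m+1) := by rw [← e] at *; linarith [hsum]
    _ = ((defD b m : ℝ) - 1) / 2 ^ (m+1) := by ring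

lemma takagi_r_mono (b : ℕ → ℕ) (hb : ∀ i, b i ≤ 1) (n : ℕ)
    (hD : ∀ i, n ≤ i → 0 < defD b i) :
    ∀ m, n ≤ m → takagi ((Jd b m + 1 : ℝ) / 2 ^ m) ≤ takagi ((Jd b n + 1 : ℝ) / 2 ^ n) := by
  intro m hm
  induction m, hm using Nat.le_induction with
  | base => exact le_refl _
  | succ m hm ih =>
    refine le_trans ?_ ih
    rcases Nat.le_one_iff_eq_zero_or_eq_one.mp (hb m) with h0 | h1
    · -- b m = 0 : r_{m+1} is the midpoint
      have hJ : Jd b (m+1) = 2 * Jd b m := by rw [Jd_succ, h0]; ring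
      have hstep := takagi_step b hb m
      have hDm : 1 ≤ defD b m := hD m hm
      have hnn : (0:ℝ) ≤ ((defD b m : ℝ) - 1) / 2 ^ (m+1) := by
        apply div_nonneg _ (by positivity)
        have : (1:ℝ) ≤ (defD b m : ℝ) := by exact_mod_cast hDm
        linarith
      have harg : ((Jd b (m+1) : ℝ) + 1) / 2 ^ (m+1) = (2 * Jd b m + 1 : ℝ) / 2 ^ (m+1) := by
        rw [hJ]; push_cast; ring_nf
      rw [harg]
      linarith
    · -- b m = 1 : r_{m+1} = r_m
      have hJ : Jd b (m+1) = 2 * Jd b m + 1 := by rw [Jd_succ, h1]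
      have harg : ((Jd b (m+1) : ℝ) + 1) / 2 ^ (m+1) = ((Jd b m : ℝ) + 1) / 2 ^ m := by
        rw [hJ, pow_succ]
        push_cast
        field_simp
        ring
      rw [harg]

theorem takagi_le_right_endpoint (k n : ℕ) (hk : k + 1 ≤ 2 ^ n)
    (x : ℝ) (b : ℕ → ℕ) (hb : IsBinaryExpansion b x)
    (hx1 : (k : ℝ) / 2 ^ n ≤ x) (hx2 : x < ((k : ℝ) + 1) / 2 ^ n)
    (hD : ∀ i, n ≤ i → 0 < defD b i) :
    takagi x ≤ takagi (((k : ℝ) + 1) / 2 ^ n) := by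
  obtain ⟨hb1, hx⟩ := hb
  have h2m : ∀ m : ℕ, 2 ^ m * x = (Jd b m : ℝ) + Fd b m := pow_mul_self_eq b hb1 x hx
  have hFlt : ∀ m : ℕ, Fd b m < 1 := by
    intro m
    obtain ⟨i0, hi0⟩ := exists_zero_digit b hb1 n hD m
    have := Fd_lt_one_of_zero b hb1 i0 m hi0
    have hp : (0:ℝ) < (1/2) ^ (i0+1) := by positivity
    linarith
  -- identify Jd b n with k
  have hJn : Jd b n = k := by
    have hp : (0:ℝ) < 2 ^ n := by positivity
    have h1 : (k : ℝ) ≤ 2 ^ n * x := by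
      rw [div_le_iff₀ hp] at hx1
      nlinarith
    have h2 : 2 ^ n * x < (k : ℝ) + 1 := by
      rw [lt_div_iff₀ hp] at hx2
      nlinarith
    have h3 := h2m n
    have h4 := Fd_nonneg b n
    have h5 := hFlt n
    have h6 : (Jd b n : ℝ) < (k:ℝ) + 1 := by linarith
    have h7 : (k : ℝ) < (Jd b n : ℝ) + 1 := by linarith
    have h6' : Jd b n < k + 1 := by exact_mod_cast h6
    have h7' : k < Jd b n + 1 := by exact_mod_cast h7
    omega
  -- bound : takagi x ≤ takagi r_m + (m+1)/2^m for m ≥ n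
  have hbound : ∀ m : ℕ, n ≤ m →
      takagi x ≤ takagi ((Jd b n + 1 : ℝ) / 2 ^ n) + ((m:ℝ) + 1) / 2 ^ m := by
    intro m hm
    have hsplit := takagi_split m x (Fd b m) (Jd b m : ℤ) (by push_cast; exact h2m m)
    have hdy : takagi ((Jd b m + 1 : ℝ) / 2 ^ m)
        = takagiPartial m ((Jd b m + 1 : ℝ) / 2 ^ m) := by
      have := takagi_dyadic m ((Jd b m : ℤ) + 1)
      push_cast at this ⊢
      exact this
    have hxr : |x - ((Jd b m : ℝ) + 1) / 2 ^ m| ≤ 1 / 2 ^ m := by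
      have hxeq : x = ((Jd b m : ℝ) + Fd b m) / 2 ^ m := by
        rw [eq_div_iff (by positivity : (2:ℝ) ^ m ≠ 0), mul_comm]
        exact h2m m
      rw [hxeq, div_sub_div_same, show (Jd b m : ℝ) + Fd b m - ((Jd b m : ℝ) + 1) = Fd b m - 1 by ring]
      rw [abs_div, abs_of_pos (by positivity : (0:ℝ) < 2 ^ m)]
      apply div_le_div_of_nonneg_right _ (by positivity)
      · rw [abs_of_nonpos (by linarith [hFlt m])]
        linarith [Fd_nonneg b m]
    have hlip := takagiPartial_lipschitz m x (((Jd b m : ℝ) + 1) / 2 ^ m)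
    have htail : takagi (Fd b m) / 2 ^ m ≤ 1 / 2 ^ m :=
      div_le_div_of_nonneg_right (takagi_le_one _) (by positivity)
    have habs : takagiPartial m x - takagiPartial m (((Jd b m : ℝ) + 1) / 2 ^ m)
        ≤ (m:ℝ) / 2 ^ m := by
      have h1 := le_abs_self (takagiPartial m x - takagiPartial m (((Jd b m : ℝ) + 1) / 2 ^ m))
      have h2 : (m:ℝ) * |x - ((Jd b m : ℝ) + 1) / 2 ^ m| ≤ (m:ℝ) * (1 / 2 ^ m) := by
        apply mul_le_mul_of_nonneg_left hxr (by positivity)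
      calc takagiPartial m x - takagiPartial m (((Jd b m : ℝ) + 1) / 2 ^ m)
          ≤ (m:ℝ) * |x - ((Jd b m : ℝ) + 1) / 2 ^ m| := le_trans h1 hlip
        _ ≤ (m:ℝ) * (1 / 2 ^ m) := h2
        _ = (m:ℝ) / 2 ^ m := by ring
    have hmono := takagi_r_mono b hb1 n hD m hm
    have : takagi x ≤ takagi ((Jd b m + 1 : ℝ) / 2 ^ m) + ((m:ℝ) + 1) / 2 ^ m := by
      rw [hsplit, hdy]
      have : ((m:ℝ) + 1) / 2 ^ m = (m:ℝ) / 2 ^ m + 1 / 2 ^ m := by ring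
      rw [this]
      push_cast at habs ⊢
      linarith
    push_cast at hmono this ⊢
    linarith
  -- pass to the limit
  have hlim : Filter.Tendsto
      (fun m : ℕ => takagi ((Jd b n + 1 : ℝ) / 2 ^ n) + ((m:ℝ) + 1) / 2 ^ m)
      Filter.atTop (nhds (takagi ((Jd b n + 1 : ℝ) / 2 ^ n))) := by
    have t1 : Filter.Tendsto (fun m : ℕ => (m:ℝ) / 2 ^ m) Filter.atTop (nhds 0) := by
      have := tendsto_pow_const_div_const_pow_of_one_lt 1 (by norm_num : (1:ℝ) < 2)
      simpa using this
    have t2 : Filter.Tendsto (fun m : ℕ => (1:ℝ) / 2 ^ m) Filter.atTop (nhds 0) := by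
      have := tendsto_pow_atTop_nhds_zero_of_lt_one (by norm_num : (0:ℝ) ≤ 1/2)
        (by norm_num : (1:ℝ)/2 < 1)
      have he : ∀ m : ℕ, ((1:ℝ)/2) ^ m = 1 / 2 ^ m := by
        intro m
        rw [div_pow, one_pow]
      simpa [he] using this
    have t3 : Filter.Tendsto (fun m : ℕ => ((m:ℝ) + 1) / 2 ^ m) Filter.atTop (nhds 0) := by
      have := t1.add t2
      simp only [add_zero] at this
      convert this using 2 with m
      ring
    have := (tendsto_const_nhds (x := takagi ((Jd b n + 1 : ℝ) / 2 ^ n))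
      (f := Filter.atTop (α := ℕ))).add t3
    simpa using this
  have hfin : takagi x ≤ takagi ((Jd b n + 1 : ℝ) / 2 ^ n) := by
    apply ge_of_tendsto hlim
    filter_upwards [Filter.eventually_ge_atTop n] with m hm
    exact hbound m hm
  rw [hJn] at hfin
  push_cast at hfin ⊢
  exact hfin
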